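/- Let k be a field and A a k-algebra, and let (P, π) be a universal measuring coalgebra for the pair (A, k). Then the measuring map π : P → Hom_k(A,k) is injective. -/

import Mathlib

open TensorProduct

universe u

variable {k : Type u} [Field k]

/-- The convolution product on `C →ₗ[k] B` for a coalgebra `C` and algebra `B`:
`(f * g)(c) = Σ f(c₍₁₎) g(c₍₂₎)`. -/
noncomputable def conv {C B : Type u} [AddCommGroup C] [Module k C] [Coalgebra k C]
    [Ring B] [Algebra k B] (f g : C →ₗ[k] B) : C →ₗ[k] B :=
  (TensorProduct.lift ((LinearMap.mul k B).compl₁₂ f g)) ∘ₗ Coalgebra.comul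

/-- `σ : C →ₗ[k] Hom(A,B)` is a measuring map if
`σ(c)(a a') = Σ σ(c₍₁₎)(a) σ(c₍₂₎)(a')` and `σ(c)(1) = ε(c) 1`. -/
noncomputable def IsMeasuring {C A B : Type u} [AddCommGroup C] [Module k C] [Coalgebra k C]
    [Ring A] [Algebra k A] [Ring B] [Algebra k B]
    (σ : C →ₗ[k] A →ₗ[k] B) : Prop :=
  (∀ (c : C) (a a' : A), σ c (a * a') = conv (σ.flip a) (σ.flip a') c) ∧
  (∀ c : C, σ c (1 : A) = (Coalgebra.counit (R := k) c) • (1 : B))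

/-- `(P, π)` is a universal measuring coalgebra for the pair `(A, B)`. -/
noncomputable def IsUniversalMeasuring {A B : Type u} [Ring A] [Algebra k A]
    [Ring B] [Algebra k B]
    (P : Type u) [AddCommGroup P] [Module k P] [Coalgebra k P]
    (π : P →ₗ[k] A →ₗ[k] B) : Prop :=
  IsMeasuring π ∧
  ∀ (C : Type u) [AddCommGroup C] [Module k C] [Coalgebra k C]
    (σ : C →ₗ[k] A →ₗ[k] B), IsMeasuring σ →
      ∃! ρ : C →ₗc[k] P, π ∘ₗ (ρ : C →ₗ[k] P) = σ


section Contract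

variable {M N M' N' S : Type*} [AddCommGroup M] [Module k M] [AddCommGroup N] [Module k N]
  [AddCommGroup M'] [Module k M'] [AddCommGroup N'] [Module k N'] [AddCommGroup S] [Module k S]

/-- Left contraction `m ⊗ n ↦ f m • n`. -/
noncomputable def contractL (f : M →ₗ[k] k) : M ⊗[k] N →ₗ[k] N :=
  TensorProduct.lift ((LinearMap.lsmul k N) ∘ₗ f)

@[simp] lemma contractL_tmul (f : M →ₗ[k] k) (m : M) (n : N) :
    contractL f (m ⊗ₜ[k] n) = f m • n := rfl

/-- Right contraction `m ⊗ n ↦ g n • m`. -/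
noncomputable def contractR (g : N →ₗ[k] k) : M ⊗[k] N →ₗ[k] M :=
  TensorProduct.lift (((LinearMap.lsmul k M) ∘ₗ g).flip)

@[simp] lemma contractR_tmul (g : N →ₗ[k] k) (m : M) (n : N) :
    contractR g (m ⊗ₜ[k] n) = g n • m := rfl

lemma zero_of_forall_contractL (z : M ⊗[k] N)
    (h : ∀ f : M →ₗ[k] k, contractL f z = (0 : N)) : z = 0 := by
  classical
  let b := Module.Basis.ofVectorSpace k M
  let E : M ⊗[k] N ≃ₗ[k] _ :=
    (TensorProduct.congr b.repr (LinearEquiv.refl k N)).trans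
      (TensorProduct.finsuppScalarLeft k N _)
  have key : ∀ (w : M ⊗[k] N) (i), E w i = contractL (b.coord i) w := by
    intro w
    induction w using TensorProduct.induction_on with
    | zero => intro i; simp
    | tmul m n =>
        intro i
        simp [E, LinearEquiv.trans_apply, Module.Basis.coord_apply]
    | add x y hx hy =>
        intro i
        simp only [map_add, Finsupp.add_apply, hx, hy]
  have hE : E z = 0 := by
    ext i
    rw [key, h]
    simp
  exact (LinearEquiv.map_eq_zero_iff E).mp hE

lemma contractL_comm (g : N →ₗ[k] k) (z : M ⊗[k] N) :
    contractL g (TensorProduct.comm k M N z) = contractR g z := by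
  induction z using TensorProduct.induction_on with
  | zero => simp
  | tmul m n => simp
  | add x y hx hy => simp [hx, hy]

lemma contract_swap (f : M →ₗ[k] k) (g : N →ₗ[k] k) (z : M ⊗[k] N) :
    f (contractR g z) = g (contractL f z) := by
  induction z using TensorProduct.induction_on with
  | zero => simp
  | tmul m n => simp [smul_eq_mul, mul_comm]
  | add x y hx hy => simp [hx, hy]

lemma zero_of_contract {ι : Type*} (F : ι → (M →ₗ[k] k))
    (hsep : ∀ m : M, (∀ i, F i m = 0) → m = 0)
    (z : M ⊗[k] N) (h : ∀ i, contractL (F i) z = 0) : z = 0 := by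
  have h2 : ∀ g : N →ₗ[k] k, contractR g z = 0 := by
    intro g
    apply hsep
    intro i
    rw [contract_swap, h i, map_zero]
  have h3 : TensorProduct.comm k M N z = 0 :=
    zero_of_forall_contractL _ (fun g => by rw [contractL_comm, h2])
  exact (LinearEquiv.map_eq_zero_iff _).mp h3

lemma contractL_map (f : M' →ₗ[k] k) (u : M →ₗ[k] M') (v : N →ₗ[k] N') (z : M ⊗[k] N) :
    contractL f (TensorProduct.map u v z) = v (contractL (f ∘ₗ u) z) := by
  induction z using TensorProduct.induction_on with
  | zero => simp
  | tmul m n => simp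
  | add x y hx hy => simp [hx, hy]

end Contract

section ConvEval

variable {C : Type u} [AddCommGroup C] [Module k C] [Coalgebra k C]

lemma conv_apply_eq (f g : C →ₗ[k] k) (c : C) :
    conv f g c = g (contractL f (Coalgebra.comul (R := k) c)) := by
  have key : ∀ w : C ⊗[k] C,
      TensorProduct.lift ((LinearMap.mul k k).compl₁₂ f g) w = g (contractL f w) := by
    intro w
    induction w using TensorProduct.induction_on with
    | zero => simp
    | tmul m n => simp [smul_eq_mul]
    | add x y hx hy => simp [hx, hy]
  simp [conv, key]

lemma conv_apply_eq' (f g : C →ₗ[k] k) (c : C) :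
    conv f g c = f (contractR g (Coalgebra.comul (R := k) c)) := by
  have key : ∀ w : C ⊗[k] C,
      TensorProduct.lift ((LinearMap.mul k k).compl₁₂ f g) w = f (contractR g w) := by
    intro w
    induction w using TensorProduct.induction_on with
    | zero => simp
    | tmul m n => simp [smul_eq_mul, mul_comm]
    | add x y hx hy => simp [hx, hy]
  simp [conv, key]

lemma contractL_counit_comul (c : C) :
    contractL (Coalgebra.counit (R := k)) (Coalgebra.comul (R := k) c) = c := by
  have key : ∀ w : C ⊗[k] C,
      contractL (Coalgebra.counit (R := k)) w
        = TensorProduct.lid k C ((Coalgebra.counit (R := k)).rTensor C w) := by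
    intro w
    induction w using TensorProduct.induction_on with
    | zero => simp
    | tmul m n => simp
    | add x y hx hy => simp [hx, hy]
  rw [key, Coalgebra.rTensor_counit_comul]
  simp

lemma contractR_counit_comul (c : C) :
    contractR (Coalgebra.counit (R := k)) (Coalgebra.comul (R := k) c) = c := by
  have key : ∀ w : C ⊗[k] C,
      contractR (Coalgebra.counit (R := k)) w
        = TensorProduct.rid k C ((Coalgebra.counit (R := k)).lTensor C w) := by
    intro w
    induction w using TensorProduct.induction_on with
    | zero => simp
    | tmul m n => simp
    | add x y hx hy => simp [hx, hy]
  rw [key, Coalgebra.lTensor_counit_comul]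
  simp

lemma conv_counit_left (g : C →ₗ[k] k) (c : C) :
    conv (Coalgebra.counit (R := k)) g c = g c := by
  rw [conv_apply_eq, contractL_counit_comul]

lemma conv_counit_right (f : C →ₗ[k] k) (c : C) :
    conv f (Coalgebra.counit (R := k)) c = f c := by
  rw [conv_apply_eq', contractR_counit_comul]

end ConvEval

section Naturality

variable {M M' : Type*} [AddCommGroup M] [Module k M] [AddCommGroup M'] [Module k M']

lemma aux_rT (u : M →ₗ[k] M') (c : M →ₗ[k] M ⊗[k] M) (c' : M' →ₗ[k] M' ⊗[k] M')
    (hc : ∀ m, c' (u m) = TensorProduct.map u u (c m)) (w : M ⊗[k] M) :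
    c'.rTensor M' (TensorProduct.map u u w)
      = TensorProduct.map (TensorProduct.map u u) u (c.rTensor M w) := by
  induction w using TensorProduct.induction_on with
  | zero => simp
  | tmul m n => simp [hc]
  | add x y hx hy => simp [hx, hy]

lemma aux_lT (u : M →ₗ[k] M') (c : M →ₗ[k] M ⊗[k] M) (c' : M' →ₗ[k] M' ⊗[k] M')
    (hc : ∀ m, c' (u m) = TensorProduct.map u u (c m)) (w : M ⊗[k] M) :
    c'.lTensor M' (TensorProduct.map u u w)
      = TensorProduct.map u (TensorProduct.map u u) (c.lTensor M w) := by
  induction w using TensorProduct.induction_on with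
  | zero => simp
  | tmul m n => simp [hc]
  | add x y hx hy => simp [hx, hy]

lemma aux_counit_rT (u : M →ₗ[k] M') (e : M →ₗ[k] k) (e' : M' →ₗ[k] k)
    (he : ∀ m, e' (u m) = e m) (w : M ⊗[k] M) :
    e'.rTensor M' (TensorProduct.map u u w) = u.lTensor k (e.rTensor M w) := by
  induction w using TensorProduct.induction_on with
  | zero => simp
  | tmul m n => simp [he]
  | add x y hx hy => simp [hx, hy]

lemma aux_counit_lT (u : M →ₗ[k] M') (e : M →ₗ[k] k) (e' : M' →ₗ[k] k)
    (he : ∀ m, e' (u m) = e m) (w : M ⊗[k] M) :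
    e'.lTensor M' (TensorProduct.map u u w) = u.rTensor k (e.lTensor M w) := by
  induction w using TensorProduct.induction_on with
  | zero => simp
  | tmul m n => simp [he]
  | add x y hx hy => simp [hx, hy]

end Naturality

/-- If `(P, π)` is a universal measuring coalgebra for the pair `(A, k)`,
then `π : P → Hom_k(A, k)` is injective. -/
theorem universal_measuring_to_base_injective
    (A : Type u) [Ring A] [Algebra k A]
    (P : Type u) [AddCommGroup P] [Module k P] [Coalgebra k P]
    (π : P →ₗ[k] A →ₗ[k] k)
    (h : IsUniversalMeasuring P π) :
    Function.Injective π := by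
  classical
  obtain ⟨⟨hm1, hm2⟩, huniv⟩ := h
  set K : Submodule k P := LinearMap.ker π with hKdef
  -- the counit vanishes on K
  have hεK : ∀ p ∈ K, Coalgebra.counit (R := k) p = 0 := by
    intro p hp
    have h1 := hm2 p
    have h0 : π p = 0 := hp
    rw [h0] at h1
    simpa [smul_eq_mul] using h1.symm
  -- the family of functionals on P: counit and evaluations of π
  let F : Option A → (P →ₗ[k] k) :=
    fun o => o.elim (Coalgebra.counit (R := k)) (fun a => π.flip a)
  have hFK : ∀ o, ∀ p ∈ K, F o p = 0 := by
    rintro (_ | a) p hp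
    · exact hεK p hp
    · show π p a = 0
      rw [show π p = 0 from hp]
      rfl
  let Fb : Option A → ((P ⧸ K) →ₗ[k] k) := fun o => K.liftQ (F o) (fun p hp => hFK o p hp)
  have hFbq : ∀ o p, Fb o (K.mkQ p) = F o p := fun o p => rfl
  -- the induced functionals separate points of P ⧸ K
  have hsep : ∀ x : P ⧸ K, (∀ o, Fb o x = 0) → x = 0 := by
    intro x hx
    obtain ⟨p, rfl⟩ := Submodule.mkQ_surjective K x
    rw [Submodule.mkQ_apply, Submodule.Quotient.mk_eq_zero]
    show p ∈ K
    rw [hKdef, LinearMap.mem_ker]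
    ext a
    exact hx (some a)
  -- convolutions of the functionals vanish on K
  have hconv : ∀ p ∈ K, ∀ o o', conv (F o) (F o') p = 0 := by
    rintro p hp (_ | a) (_ | a')
    · show conv (Coalgebra.counit (R := k)) (Coalgebra.counit (R := k)) p = 0
      rw [conv_counit_left]
      exact hεK p hp
    · show conv (Coalgebra.counit (R := k)) (π.flip a') p = 0
      rw [conv_counit_left]
      exact hFK (some a') p hp
    · show conv (π.flip a) (Coalgebra.counit (R := k)) p = 0
      rw [conv_counit_right]
      exact hFK (some a) p hp
    · show conv (π.flip a) (π.flip a') p = 0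
      rw [← hm1 p a a']
      show π p (a * a') = 0
      rw [show π p = 0 from hp]
      rfl
  -- comul descends to the quotient
  have hker : K ≤ LinearMap.ker
      (TensorProduct.map K.mkQ K.mkQ ∘ₗ Coalgebra.comul (R := k)) := by
    intro p hp
    rw [LinearMap.mem_ker, LinearMap.comp_apply]
    apply zero_of_contract Fb hsep
    intro o
    apply hsep
    intro o'
    rw [contractL_map]
    have hcomp : (Fb o) ∘ₗ K.mkQ = F o := K.liftQ_mkQ (F o) _
    rw [hcomp, hFbq, ← conv_apply_eq]
    exact hconv p hp o o'
  let comul' : (P ⧸ K) →ₗ[k] (P ⧸ K) ⊗[k] (P ⧸ K) :=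
    K.liftQ (TensorProduct.map K.mkQ K.mkQ ∘ₗ Coalgebra.comul (R := k)) hker
  let counit' : (P ⧸ K) →ₗ[k] k :=
    K.liftQ (Coalgebra.counit (R := k)) (fun p hp => hεK p hp)
  have hcq : ∀ p : P, comul' (K.mkQ p)
      = TensorProduct.map K.mkQ K.mkQ (Coalgebra.comul (R := k) p) := fun p => rfl
  have hcq2 : ∀ p : P, counit' (K.mkQ p) = Coalgebra.counit (R := k) p := fun p => rfl
  letI : Coalgebra k (P ⧸ K) :=
    { comul := comul'
      counit := counit'
      coassoc := by
        apply LinearMap.ext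
        intro x
        obtain ⟨p, rfl⟩ := Submodule.mkQ_surjective K x
        simp only [LinearMap.comp_apply, LinearEquiv.coe_coe]
        rw [hcq, aux_rT K.mkQ (Coalgebra.comul (R := k)) comul' hcq,
          ← TensorProduct.map_map_assoc,
          Coalgebra.coassoc_apply, ← aux_lT K.mkQ (Coalgebra.comul (R := k)) comul' hcq, ← hcq]
      rTensor_counit_comp_comul := by
        apply LinearMap.ext
        intro x
        obtain ⟨p, rfl⟩ := Submodule.mkQ_surjective K x
        simp only [LinearMap.comp_apply]
        rw [hcq, aux_counit_rT K.mkQ (Coalgebra.counit (R := k)) counit' hcq2,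
          Coalgebra.rTensor_counit_comul]
        simp
      lTensor_counit_comp_comul := by
        apply LinearMap.ext
        intro x
        obtain ⟨p, rfl⟩ := Submodule.mkQ_surjective K x
        simp only [LinearMap.comp_apply]
        rw [hcq, aux_counit_lT K.mkQ (Coalgebra.counit (R := k)) counit' hcq2,
          Coalgebra.lTensor_counit_comul]
        simp }
  have hcomulQ : Coalgebra.comul (R := k) (A := P ⧸ K) = comul' := rfl
  have hcounitQ : Coalgebra.counit (R := k) (A := P ⧸ K) = counit' := rfl
  -- the induced measuring map on the quotient
  let σ' : (P ⧸ K) →ₗ[k] A →ₗ[k] k := K.liftQ π hKdef.le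
  have hσq : σ' ∘ₗ K.mkQ = π := K.liftQ_mkQ π _
  have hσqp : ∀ p : P, σ' (K.mkQ p) = π p := fun p => rfl
  have hflip : ∀ a : A, (σ'.flip a) ∘ₗ K.mkQ = π.flip a := by
    intro a
    apply LinearMap.ext
    intro p
    simp only [LinearMap.comp_apply, LinearMap.flip_apply, hσqp]
  have hσmeas : IsMeasuring σ' := by
    constructor
    · intro c a a'
      obtain ⟨p, rfl⟩ := Submodule.mkQ_surjective K c
      have hR : conv (σ'.flip a) (σ'.flip a') (K.mkQ p)
          = conv (π.flip a) (π.flip a') p := by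
        rw [conv_apply_eq, hcomulQ, hcq, contractL_map, hflip]
        exact (LinearMap.congr_fun (hflip a') _).trans (conv_apply_eq _ _ _).symm
      rw [hR, hσqp]
      exact hm1 p a a'
    · intro c
      obtain ⟨p, rfl⟩ := Submodule.mkQ_surjective K c
      rw [hσqp, hcounitQ, hcq2]
      exact hm2 p
  -- the quotient map as a coalgebra homomorphism
  let qHom : P →ₗc[k] (P ⧸ K) :=
    { toLinearMap := K.mkQ
      counit_comp := LinearMap.ext fun p => hcq2 p
      map_comp_comul := LinearMap.ext fun p => (hcq p).symm }
  obtain ⟨ρ, hρ, -⟩ := huniv (P ⧸ K) σ' hσmeas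
  have hPuniq := huniv P π ⟨hm1, hm2⟩
  have hid : ρ.comp qHom = CoalgHom.id k P := by
    have h1 : π ∘ₗ ((ρ.comp qHom : P →ₗc[k] P) : P →ₗ[k] P) = π := by
      show π ∘ₗ ((ρ : (P ⧸ K) →ₗ[k] P) ∘ₗ K.mkQ) = π
      rw [← LinearMap.comp_assoc, hρ]
      exact hσq
    have h2 : π ∘ₗ ((CoalgHom.id k P : P →ₗc[k] P) : P →ₗ[k] P) = π := by
      show π ∘ₗ LinearMap.id = π
      exact LinearMap.comp_id π
    exact hPuniq.unique h1 h2
  rw [← LinearMap.ker_eq_bot, ← hKdef, Submodule.eq_bot_iff]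
  intro p hp
  have hq0 : K.mkQ p = 0 := by
    rwa [Submodule.mkQ_apply, Submodule.Quotient.mk_eq_zero]
  have h3 : ρ (K.mkQ p) = p := DFunLike.congr_fun hid p
  rw [hq0, map_zero] at h3
  exact h3.symm
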